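/- Let m be an even positive integer and let 𝒞 be the order m dimension n symmetric Cauchy tensor with generating vector c ∈ ℝ^n satisfying c_i > 0 for all i, and let r_i = Σ_{i_2,…,i_m=1}^n 1/(c_i + c_{i_2} + ⋯ + c_{i_m}) be the row sums of 𝒞. Then 𝒞 is positive definite if and only if r_1, r_2,…, r_n are mutually distinct. -/

import Mathlib

/-!
Writing `1 / s = ∫₀¹ t ^ (s - 1) dt` for every denominator turns the form into
`𝒞xᵐ = ∫₀¹ (∑ₖ xₖ t ^ cₖ) ^ m / t dt`. For even `m` the integrand is nonnegative, and it is
positive somewhere unless `∑ₖ xₖ t ^ cₖ` vanishes on `(0, 1)`, which for distinct `cₖ` forces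
`x = 0`. If `cᵢ = cⱼ` with `i ≠ j`, then `x = eᵢ - eⱼ` gives `𝒞xᵐ = (∑ₖ xₖ) ^ m / (m cᵢ) = 0`.
Finally `rᵢ` is a strictly decreasing function of `cᵢ`, so the row sums are distinct exactly
when the `cᵢ` are.
-/

open Finset Set intervalIntegral
open scoped Interval
open MeasureTheory (volume)

lemma exists_mem_Ioo_sum_mul_rpow_ne_zero {n : ℕ} {c x : Fin n → ℝ}
    (hc : Function.Injective c) (hx : x ≠ 0) :
    ∃ t ∈ Ioo (0 : ℝ) 1, ∑ k, x k * t ^ c k ≠ 0 := by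
  by_contra! h
  let z : Fin n → ℝ := fun k => (1 / 2 : ℝ) ^ c k
  have hz : Function.Injective z :=
    (Real.strictAnti_rpow_of_base_lt_one (by norm_num) (by norm_num)).injective.comp hc
  -- Evaluating at `t = 2⁻ⁱ⁻¹` turns the vanishing into a Vandermonde system in the nodes `z`.
  have hxz : (fun k => x k * z k) = 0 := by
    refine Matrix.eq_zero_of_forall_pow_sum_mul_pow_eq_zero hz fun i => ?_
    have hi := h ((1 / 2) ^ (i + 1 : ℕ))
      ⟨by positivity, pow_lt_one₀ (by norm_num) (by norm_num) (by omega)⟩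
    rw [← hi]
    refine Finset.sum_congr rfl fun k _ => ?_
    rw [← Real.rpow_pow_comm (by norm_num), pow_succ]
    ring
  exact hx (funext fun k => (mul_eq_zero.mp (congrFun hxz k)).resolve_right (by positivity))

lemma one_div_eq_integral_rpow_sub_one {s : ℝ} (hs : 0 < s) :
    1 / s = ∫ t in (0 : ℝ)..1, t ^ (s - 1) := by
  rw [integral_rpow (Or.inl (by linarith)), sub_add_cancel, Real.one_rpow, Real.zero_rpow hs.ne',
    sub_zero]

lemma intervalIntegrable_sum_mul_rpow {α : Type*} [Fintype α] {p s : α → ℝ}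
    (hs : ∀ a, 0 < s a) :
    IntervalIntegrable (fun t => ∑ a, p a * t ^ (s a - 1)) volume 0 1 := by
  rw [← Finset.sum_fn]
  exact IntervalIntegrable.sum univ fun a _ =>
    (intervalIntegrable_rpow' (r := s a - 1) (by linarith [hs a])).const_mul (p a)

lemma sum_div_eq_integral_sum_mul_rpow {α : Type*} [Fintype α] {p s : α → ℝ}
    (hs : ∀ a, 0 < s a) :
    ∑ a, p a / s a = ∫ t in (0 : ℝ)..1, ∑ a, p a * t ^ (s a - 1) := by
  rw [integral_finsetSum fun a _ => (intervalIntegrable_rpow' (by linarith [hs a])).const_mul _]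
  refine Finset.sum_congr rfl fun a _ => ?_
  rw [integral_const_mul, ← one_div_eq_integral_rpow_sub_one (hs a), mul_one_div]

lemma integral_pos_of_continuousOn_Ioc {f : ℝ → ℝ} {a b : ℝ}
    (hfi : IntervalIntegrable f volume a b) (hfc : ContinuousOn f (Ioc a b))
    (hf : ∀ x ∈ Ioc a b, 0 ≤ f x) (hpos : ∃ c ∈ Ioo a b, 0 < f c) :
    0 < ∫ x in a..b, f x := by
  obtain ⟨c, hc, hfc0⟩ := hpos
  calc 0 < ∫ x in c..b, f x :=
        integral_pos hc.2 (hfc.mono (Icc_subset_Ioc_iff hc.2.le |>.mpr ⟨hc.1, le_rfl⟩))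
          (fun x hx => hf x (Ioc_subset_Ioc_left hc.1.le hx)) ⟨c, left_mem_Icc.mpr hc.2.le, hfc0⟩
    _ ≤ ∫ x in a..b, f x :=
        integral_mono_interval hc.1.le hc.2.le le_rfl
          ((MeasureTheory.ae_restrict_iff' measurableSet_Ioc).mpr (.of_forall hf)) hfi

lemma sum_prod_mul_rpow_eq_sum_mul_rpow_pow_div {ι : Type*} [Fintype ι] (m : ℕ) (c x : ι → ℝ)
    {t : ℝ} (ht : 0 < t) :
    ∑ a : Fin m → ι, (∏ k, x (a k)) * t ^ (∑ k, c (a k) - 1) = (∑ l, x l * t ^ c l) ^ m / t := by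
  rw [Fintype.sum_pow, Finset.sum_div]
  refine Finset.sum_congr rfl fun a _ => ?_
  rw [Real.rpow_sub ht, Real.rpow_one, Real.rpow_sum_of_pos ht, Finset.prod_mul_distrib,
    mul_div_assoc]

noncomputable def cauchyForm {ι : Type*} [Fintype ι] (m : ℕ) (c x : ι → ℝ) : ℝ :=
  ∑ a : Fin m → ι, (∏ k, x (a k)) / ∑ k, c (a k)

lemma cauchyForm_eq_sum_pow_div {ι : Type*} [Fintype ι] (m : ℕ) {c x : ι → ℝ} {γ : ℝ}
    (hcx : ∀ l, x l ≠ 0 → c l = γ) :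
    cauchyForm m c x = (∑ l, x l) ^ m / (m * γ) := by
  have hterm : ∀ a : Fin m → ι, (∏ k, x (a k)) / ∑ k, c (a k) = (∏ k, x (a k)) / (m * γ) := by
    intro a
    by_cases ha : ∀ k, x (a k) ≠ 0
    · simp [hcx _ (ha _)]
    · obtain ⟨k, hk⟩ := not_forall_not.mp ha
      rw [Finset.prod_eq_zero (mem_univ k) hk, zero_div, zero_div]
  rw [cauchyForm, Finset.sum_congr rfl fun a _ => hterm a, ← Finset.sum_div, Fintype.sum_pow]

section

variable {ι : Type*} [Fintype ι] {m : ℕ} {c : ι → ℝ} (x : ι → ℝ)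

lemma eqOn_sum_prod_mul_rpow_sum_mul_rpow_pow_div :
    EqOn (fun t => ∑ a : Fin m → ι, (∏ k, x (a k)) * t ^ (∑ k, c (a k) - 1))
      (fun t => (∑ l, x l * t ^ c l) ^ m / t) (Ι 0 1) := fun t ht =>
  sum_prod_mul_rpow_eq_sum_mul_rpow_pow_div m c x (by simpa using ht.1)

lemma cauchyForm_eq_integral (hm : 0 < m) (hc : ∀ i, 0 < c i) :
    cauchyForm m c x = ∫ t in (0 : ℝ)..1, (∑ l, x l * t ^ c l) ^ m / t := by
  rw [cauchyForm,
    sum_div_eq_integral_sum_mul_rpow fun a => sum_pos (fun k _ => hc (a k)) ⟨⟨0, hm⟩, mem_univ _⟩]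
  exact integral_congr_ae (.of_forall fun t ht => eqOn_sum_prod_mul_rpow_sum_mul_rpow_pow_div x ht)

lemma intervalIntegrable_sum_mul_rpow_pow_div (hm : 0 < m) (hc : ∀ i, 0 < c i) :
    IntervalIntegrable (fun t => (∑ l, x l * t ^ c l) ^ m / t) volume 0 1 :=
  (intervalIntegrable_congr (eqOn_sum_prod_mul_rpow_sum_mul_rpow_pow_div x)).mp
    (intervalIntegrable_sum_mul_rpow fun a => sum_pos (fun k _ => hc (a k)) ⟨⟨0, hm⟩, mem_univ _⟩)

lemma continuousOn_sum_mul_rpow_pow_div :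
    ContinuousOn (fun t => (∑ l, x l * t ^ c l) ^ m / t) (Ioc 0 1) := by
  refine ContinuousOn.div (ContinuousOn.pow ?_ m) continuousOn_id fun t ht => ht.1.ne'
  exact continuousOn_finsetSum _ fun l _ =>
    (continuousOn_id.rpow_const fun t ht => Or.inl ht.1.ne').const_smul (x l)

end

lemma cauchyForm_pos {n m : ℕ} {c x : Fin n → ℝ} (hm : 0 < m) (hme : Even m)
    (hc : ∀ i, 0 < c i) (hinj : Function.Injective c) (hx : x ≠ 0) : 0 < cauchyForm m c x := by
  rw [cauchyForm_eq_integral x hm hc]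
  obtain ⟨t₀, ht₀, hgt₀⟩ := exists_mem_Ioo_sum_mul_rpow_ne_zero hinj hx
  exact integral_pos_of_continuousOn_Ioc (intervalIntegrable_sum_mul_rpow_pow_div x hm hc)
    (continuousOn_sum_mul_rpow_pow_div x) (fun t ht => div_nonneg (hme.pow_nonneg _) ht.1.le)
    ⟨t₀, ht₀, div_pos (hme.pow_pos hgt₀) ht₀.1⟩

lemma cauchyForm_single_sub_single {ι : Type*} [Fintype ι] [DecidableEq ι] {m : ℕ} (hm : m ≠ 0)
    {c : ι → ℝ} {i j : ι} (hij : c i = c j) :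
    cauchyForm m c (Pi.single i 1 - Pi.single j 1) = 0 := by
  have hsupp : ∀ l, (Pi.single i 1 - Pi.single j 1 : ι → ℝ) l ≠ 0 → c l = c i := by
    intro l hl
    by_cases hli : l = i
    · rw [hli]
    · by_cases hlj : l = j
      · rw [hlj, hij]
      · simp [hli, hlj] at hl
  rw [cauchyForm_eq_sum_pow_div m hsupp]
  simp [zero_pow hm]

lemma strictAntiOn_sum_one_div_add {β : Type*} [Fintype β] [Nonempty β] {d : β → ℝ}
    (hd : ∀ b, 0 ≤ d b) : StrictAntiOn (fun γ => ∑ b, 1 / (γ + d b)) (Ioi 0) := by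
  intro γ hγ δ hδ hγδ
  exact sum_lt_sum_of_nonempty univ_nonempty fun b _ =>
    one_div_lt_one_div_of_lt (by linarith [hd b, mem_Ioi.mp hγ]) (by linarith)

lemma pairwise_row_sums_ne_iff_injective {ι : Type*} [Fintype ι] (p : ℕ) {c : ι → ℝ}
    (hc : ∀ i, 0 < c i) :
    (∀ i j : ι, i ≠ j →
        (∑ t : Fin p → ι, 1 / (c i + ∑ k, c (t k))) ≠ ∑ t : Fin p → ι, 1 / (c j + ∑ k, c (t k))) ↔
      Function.Injective c := by
  rw [← Pairwise, ← Function.injective_iff_pairwise_ne]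
  refine ⟨fun h => h.of_comp (f := fun γ => ∑ t : Fin p → ι, 1 / (γ + ∑ k, c (t k))),
    fun hinj i j hij => hinj ?_⟩
  have : Nonempty ι := ⟨i⟩
  exact (strictAntiOn_sum_one_div_add fun t => sum_nonneg fun k _ => (hc (t k)).le).injOn
    (hc i) (hc j) hij

/-- An even order symmetric Cauchy tensor with positive generating
vector is positive definite iff its row sums are mutually distinct. -/
theorem cauchy_tensor_pd_iff_row_sums_distinct
    (m n : ℕ) (hm : 0 < m) (hme : Even m) (c : Fin n → ℝ)
    (hc : ∀ i, 0 < c i) :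
    (∀ x : Fin n → ℝ, x ≠ 0 →
        0 < ∑ i : Fin m → Fin n, (∏ j, x (i j)) / (∑ j, c (i j))) ↔
      (∀ i j : Fin n, i ≠ j →
        (∑ t : Fin (m - 1) → Fin n, 1 / (c i + ∑ k, c (t k)))
          ≠ ∑ t : Fin (m - 1) → Fin n, 1 / (c j + ∑ k, c (t k))) := by
  rw [pairwise_row_sums_ne_iff_injective (m - 1) hc]
  change (∀ x : Fin n → ℝ, x ≠ 0 → 0 < cauchyForm m c x) ↔ Function.Injective c
  refine ⟨fun hpd => ?_, fun hinj x hx => cauchyForm_pos hm hme hc hinj hx⟩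
  by_contra hnot
  obtain ⟨i, j, hij, hne⟩ := Function.not_injective_iff.mp hnot
  have hx : (Pi.single i 1 - Pi.single j 1 : Fin n → ℝ) ≠ 0 := by
    rw [sub_ne_zero]
    intro h
    simpa [hne] using congrFun h i
  exact (hpd _ hx).ne' (cauchyForm_single_sub_single hm.ne' hij)
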